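/- Let G be a finite group with normal subgroups N_1, N_2 such that G/N_1 and G/N_2 both lie in the class H_t of groups whose Sylow subgroups are all K-P_t-subnormal, and suppose every group in H_t is soluble. Then G/(N_1 ∩ N_2) lies in H_t. -/

import Mathlib

/-- One step of a `K`-`ℙ_t`-subnormal chain: `A ≤ B` and either `A` is normal in `B`,
or the index `|B : A|` is a prime `p` such that `p - 1` is not divisible by the
`(t+1)`-th power of any prime. -/
def KPtStep (t : ℕ) {G : Type*} [Group G] (A B : Subgroup G) : Prop :=
  A ≤ B ∧ ((A.subgroupOf B).Normal ∨
    ∃ p : ℕ, p.Prime ∧ A.relIndex B = p ∧ ∀ q : ℕ, q.Prime → ¬ q ^ (t + 1) ∣ (p - 1))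

/-- `H` is `K`-`ℙ_t`-subnormal in `G` if there is a chain
`H = H₀ ≤ H₁ ≤ ⋯ ≤ Hₙ = G` each step of which is a `KPtStep`. -/
def KPtSubnormal (t : ℕ) {G : Type*} [Group G] (H : Subgroup G) : Prop :=
  Relation.ReflTransGen (KPtStep t) H ⊤

/-- The class `ℌ_t` of groups all of whose Sylow subgroups are `K`-`ℙ_t`-subnormal. -/
def MemHt (t : ℕ) (G : Type*) [Group G] : Prop :=
  ∀ (p : ℕ) (P : Sylow p G), KPtSubnormal t (P : Subgroup G)

universe u

/-!
Intersecting a `K`-`ℙ_t`-subnormal chain with a subgroup `K` gives such a chain in `K`: normal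
steps stay normal, and a step of prime index `p` stays of index `p` or becomes normal, because in
a finite soluble group a subgroup `M` of prime index `p` satisfies `|K : K ∩ M| = p` or `K' ≤ M`.
Indeed, modulo the core of `M` there is a self-centralizing normal subgroup `A` of order `p`
complementing `M`, and `G/A` embeds in the abelian group `Aut A`; so either `A ≤ K`, or `K ∩ A = 1`
and `K` is abelian modulo the core.

The group `G/(N₁ ∩ N₂)` embeds in `G/N₁ × G/N₂`, hence is soluble. A Sylow `p`-subgroup `P` of it
is the intersection of the preimages `Q₁`, `Q₂` of Sylow subgroups of `G/N₁` and `G/N₂` containing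
its images; both are `K`-`ℙ_t`-subnormal, and intersecting the chain from `Q₁` with `Q₂` gives a
chain `P = Q₁ ∩ Q₂ → ⋯ → Q₂ → ⋯ → G`.
-/

open Subgroup
open scoped commutatorElement

theorem Group.IsSolvable.exists_normal_ne_bot_commutator_eq_bot {G : Type*} [Group G]
    [Group.IsSolvable G] [Nontrivial G] : ∃ A : Subgroup G, A.Normal ∧ A ≠ ⊥ ∧ ⁅A, A⁆ = ⊥ := by
  classical
  have hex : ∃ n, derivedSeries G (n + 1) = ⊥ := by
    obtain ⟨n, hn⟩ := Group.IsSolvable.solvable (G := G)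
    exact ⟨n, le_bot_iff.mp (hn ▸ derivedSeries_antitone G n.le_succ)⟩
  refine ⟨derivedSeries G (Nat.find hex), derivedSeries_normal _ _, ?_, Nat.find_spec hex⟩
  cases h : Nat.find hex with
  | zero => exact top_ne_bot
  | succ n => exact Nat.find_min hex (h ▸ n.lt_succ_self)

namespace Subgroup

variable {G : Type*} [Group G]

theorem sup_eq_top_of_index_eq_prime {M A : Subgroup G} {p : ℕ} (hp : p.Prime)
    (hM : M.index = p) (hA : ¬A ≤ M) : A ⊔ M = ⊤ := by
  have h := relIndex_mul_index (le_sup_right : M ≤ A ⊔ M)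
  rw [hM] at h
  rcases Nat.prime_mul_iff.mp (h ▸ hp) with ⟨-, hidx⟩ | ⟨-, hrel⟩
  · exact index_eq_one.mp hidx
  · exact absurd (le_sup_left.trans (relIndex_eq_one.mp hrel)) hA

theorem normal_inf_of_le_centralizer {A L M : Subgroup G} [L.Normal] (hAM : A ⊔ M = ⊤)
    (hAL : A ≤ centralizer L) : (L ⊓ M).Normal := by
  rw [← normalizer_eq_top_iff, eq_top_iff, ← hAM]
  refine sup_le ?_ ?_
  · exact hAL.trans ((centralizer_le inf_le_left).trans (centralizer_le_normalizer _))
  · exact (le_inf le_normalizer_of_normal M.le_normalizer).trans inf_normalizer_le_normalizer_inf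

theorem card_eq_index_of_inf_eq_bot {N M : Subgroup G} [N.Normal] (hinf : N ⊓ M = ⊥)
    (hsup : N ⊔ M = ⊤) : Nat.card N = M.index := by
  refine (IsComplement'.index_eq_card ?_).symm
  refine isComplement'_of_disjoint_and_mul_eq_univ (disjoint_iff.mpr hinf) ?_
  rw [← normal_mul, hsup, coe_top]

theorem commutator_le_centralizer_of_isCyclic (A : Subgroup G) [A.Normal] [IsCyclic A] :
    _root_.commutator G ≤ centralizer (A : Set G) := by
  have hcomm : ∀ a b : MulAut A, Commute a b := fun a b =>
    (IsCyclic.mulAutMulEquiv A).injective (by simp only [map_mul, mul_comm])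
  have hker : (MulAut.conjNormal : G →* MulAut A).ker ≤ centralizer (A : Set G) := by
    intro g hg
    rw [mem_centralizer_iff]
    intro a ha
    have := congrArg Subtype.val (DFunLike.congr_fun (MonoidHom.mem_ker.mp hg) ⟨a, ha⟩)
    simp only [MulAut.conjNormal_apply, MulAut.one_apply] at this
    exact (mul_inv_eq_iff_eq_mul.mp this).symm
  refine le_trans (commutator_le.mpr fun g _ h _ => ?_) hker
  exact MonoidHom.mem_ker.mpr (by rw [map_commutatorElement, (hcomm _ _).commutator_eq])

theorem exists_normal_card_eq_prime_of_normalCore_eq_bot [Finite G] [Group.IsSolvable G]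
    {M : Subgroup G} {p : ℕ} (hp : p.Prime) (hM : M.index = p) (hcore : M.normalCore = ⊥) :
    ∃ A : Subgroup G, A.Normal ∧ Nat.card A = p ∧ A ⊓ M = ⊥ ∧ _root_.commutator G ≤ A := by
  have hbot : ∀ N : Subgroup G, N.Normal → N ≤ M → N = ⊥ := fun N _ hN =>
    le_bot_iff.mp (hcore ▸ normal_le_normalCore.mpr hN)
  have : Nontrivial G := by
    refine (subsingleton_or_nontrivial G).resolve_left fun _ => hp.ne_one ?_
    rw [← hM, Subsingleton.elim M ⊤, index_top]
  obtain ⟨A, hAn, hA, hAA⟩ := Group.IsSolvable.exists_normal_ne_bot_commutator_eq_bot (G := G)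
  have hAM : A ⊔ M = ⊤ := sup_eq_top_of_index_eq_prime hp hM fun h => hA (hbot A hAn h)
  have hAC : A ≤ centralizer (A : Set G) := commutator_eq_bot_iff_le_centralizer.mp hAA
  have hAinf : A ⊓ M = ⊥ := hbot _ (normal_inf_of_le_centralizer hAM hAC) inf_le_right
  have hAcard : Nat.card A = p := (card_eq_index_of_inf_eq_bot hAinf hAM).trans hM
  have hCinf : centralizer (A : Set G) ⊓ M = ⊥ :=
    hbot _ (normal_inf_of_le_centralizer hAM (le_centralizer_iff.mp le_rfl)) inf_le_right
  have hCM : centralizer (A : Set G) ⊔ M = ⊤ := eq_top_iff.mpr (hAM ▸ sup_le_sup_right hAC M)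
  -- `A` is self-centralizing: both `A` and its centralizer are complements of `M`.
  have hCA : centralizer (A : Set G) = A := by
    refine (eq_of_le_of_card_ge hAC ?_).symm
    rw [card_eq_index_of_inf_eq_bot hCinf hCM, hAcard, hM]
  have : Fact p.Prime := ⟨hp⟩
  have : IsCyclic A := isCyclic_of_prime_card hAcard
  exact ⟨A, hAn, hAcard, hAinf, hCA ▸ commutator_le_centralizer_of_isCyclic A⟩

theorem relIndex_eq_or_commutator_le_of_normalCore_eq_bot [Finite G] [Group.IsSolvable G]
    {M : Subgroup G} {p : ℕ} (hp : p.Prime) (hM : M.index = p) (hcore : M.normalCore = ⊥)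
    (K : Subgroup G) : M.relIndex K = p ∨ ⁅K, K⁆ ≤ M := by
  obtain ⟨A, -, hAcard, hAinf, hGA⟩ := exists_normal_card_eq_prime_of_normalCore_eq_bot hp hM hcore
  have : Fact (Nat.card A).Prime := ⟨hAcard ▸ hp⟩
  rcases (K.subgroupOf A).eq_bot_or_eq_top_of_prime_card with hAK | hAK
  · right
    calc ⁅K, K⁆ ≤ _root_.commutator G ⊓ K :=
          le_inf (commutator_mono le_top le_top) K.commutator_le_self
      _ ≤ A ⊓ K := inf_le_inf_right K hGA
      _ = ⊥ := disjoint_iff.mp (subgroupOf_eq_bot.mp hAK).symm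
      _ ≤ M := bot_le
  · left
    have hMA : M.relIndex A = p := by
      rw [← inf_relIndex_right, inf_comm, hAinf, relIndex_bot_left, hAcard]
    refine le_antisymm ?_
      (hMA ▸ relIndex_le_of_le_right (subgroupOf_eq_top.mp hAK) index_ne_zero_of_finite)
    calc M.relIndex K ≤ M.relIndex ⊤ := relIndex_le_of_le_right le_top index_ne_zero_of_finite
      _ = p := by rw [relIndex_top_right, hM]

theorem relIndex_eq_or_commutator_le_of_index_eq_prime [Finite G] [Group.IsSolvable G]
    {M : Subgroup G} {p : ℕ} (hp : p.Prime) (hM : M.index = p) (K : Subgroup G) :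
    M.relIndex K = p ∨ ⁅K, K⁆ ≤ M := by
  set f := QuotientGroup.mk' M.normalCore
  have hf : Function.Surjective f := QuotientGroup.mk'_surjective _
  have hker : f.ker ≤ M := (QuotientGroup.ker_mk' _).trans_le M.normalCore_le
  have hMf : (M.map f).comap f = M := comap_map_eq_self hker
  have hcore : (M.map f).normalCore = ⊥ := by
    rw [← map_comap_eq_self_of_surjective hf (M.map f).normalCore, map_eq_bot_iff,
      QuotientGroup.ker_mk']
    exact normal_le_normalCore.mpr ((comap_mono (normalCore_le _)).trans hMf.le)
  rcases relIndex_eq_or_commutator_le_of_normalCore_eq_bot hp ((index_map_eq M hf hker).trans hM)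
    hcore (K.map f) with h | h
  · rw [← relIndex_comap, hMf] at h
    exact Or.inl h
  · rw [← map_commutator, map_le_iff_le_comap, hMf] at h
    exact Or.inr h

theorem normal_subgroupOf_of_commutator_le {M K : Subgroup G} (h : ⁅K, K⁆ ≤ M) :
    (M.subgroupOf K).Normal := by
  rw [← inf_subgroupOf_right, normal_subgroupOf_iff inf_le_right]
  intro x k hx hk
  have hc : ⁅k, x⁆ ∈ M := h (commutator_mem_commutator hk hx.2)
  refine ⟨?_, K.mul_mem (K.mul_mem hk hx.2) (K.inv_mem hk)⟩
  simpa [commutatorElement_def] using M.mul_mem hc hx.1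

end Subgroup

section KPtSubnormal

variable {t : ℕ}

theorem KPtStep.inf_of_le {G : Type*} [Group G] [Finite G] [Group.IsSolvable G]
    {H H' K : Subgroup G} (h : KPtStep t H H') (hK : K ≤ H') : KPtStep t (H ⊓ K) K := by
  obtain ⟨-, hnormal | ⟨p, hp, hidx, hq⟩⟩ := h
  · refine ⟨inf_le_right, Or.inl ?_⟩
    have := inf_subgroupOf_inf_normal_of_left (A' := H) (A := H') K
    rwa [inf_eq_right.mpr hK] at this
  · refine ⟨inf_le_right, ?_⟩
    rw [inf_subgroupOf_right, inf_relIndex_right]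
    rcases relIndex_eq_or_commutator_le_of_index_eq_prime hp hidx (K.subgroupOf H') with h | h
    · exact Or.inr ⟨p, hp, (relIndex_subgroupOf hK).symm.trans h, hq⟩
    · refine Or.inl (normal_subgroupOf_of_commutator_le ?_)
      calc ⁅K, K⁆ = ⁅K.subgroupOf H', K.subgroupOf H'⁆.map H'.subtype := by
            rw [map_commutator, subgroupOf_map_subtype, inf_of_le_left hK]
        _ ≤ (H.subgroupOf H').map H'.subtype := map_mono h
        _ ≤ H := by rw [subgroupOf_map_subtype]; exact inf_le_left

theorem KPtStep.reflTransGen_inf {G : Type*} [Group G] [Finite G] [Group.IsSolvable G]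
    {H T : Subgroup G} (hc : Relation.ReflTransGen (KPtStep t) H T) {K : Subgroup G}
    (hK : K ≤ T) : Relation.ReflTransGen (KPtStep t) (H ⊓ K) K := by
  induction hc using Relation.ReflTransGen.head_induction_on with
  | refl => rw [inf_eq_right.mpr hK]
  | @head A B hstep _ ih =>
    have h := hstep.inf_of_le (inf_le_left : B ⊓ K ≤ B)
    rw [← inf_assoc, inf_of_le_left hstep.1] at h
    exact .head h ih

theorem KPtStep.comap {G G' : Type*} [Group G] [Group G'] {f : G →* G'}
    (hf : Function.Surjective f) {A B : Subgroup G'} (h : KPtStep t A B) :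
    KPtStep t (A.comap f) (B.comap f) := by
  obtain ⟨hAB, hnormal | ⟨p, hp, hidx, hq⟩⟩ := h
  · refine ⟨comap_mono hAB, Or.inl ?_⟩
    rw [normal_subgroupOf_iff_le_normalizer hAB] at hnormal
    rw [normal_subgroupOf_iff_le_normalizer (comap_mono hAB)]
    exact (comap_mono hnormal).trans (le_normalizer_comap f)
  · refine ⟨comap_mono hAB, Or.inr ⟨p, hp, ?_, hq⟩⟩
    rwa [relIndex_comap, map_comap_eq_self_of_surjective hf]

theorem KPtSubnormal.comap {G G' : Type*} [Group G] [Group G'] {f : G →* G'}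
    (hf : Function.Surjective f) {H : Subgroup G'} (h : KPtSubnormal t H) :
    KPtSubnormal t (H.comap f) := by
  have : Relation.ReflTransGen (KPtStep t) (H.comap f) ((⊤ : Subgroup G').comap f) :=
    Relation.ReflTransGen.lift (Subgroup.comap f) (fun _ _ => KPtStep.comap hf) _ _ h
  rwa [comap_top] at this

end KPtSubnormal

theorem IsPGroup.comap_inf_comap_of_injective_prod {X Y₁ Y₂ : Type*} [Group X] [Group Y₁]
    [Group Y₂] {p : ℕ} {f₁ : X →* Y₁} {f₂ : X →* Y₂} (hinj : Function.Injective (f₁.prod f₂))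
    {Q₁ : Subgroup Y₁} {Q₂ : Subgroup Y₂} (h₁ : IsPGroup p Q₁) (h₂ : IsPGroup p Q₂) :
    IsPGroup p ↥(Q₁.comap f₁ ⊓ Q₂.comap f₂) := by
  have hprod : IsPGroup p (Q₁.prod Q₂) := by
    rintro ⟨⟨a, b⟩, ha, hb⟩
    obtain ⟨m, hm⟩ := h₁ ⟨a, ha⟩
    obtain ⟨n, hn⟩ := h₂ ⟨b, hb⟩
    refine ⟨m + n, Subtype.ext (Prod.ext ?_ ?_)⟩
    · simpa [pow_add, pow_mul] using congrArg (fun x : Q₁ => (x : Y₁) ^ p ^ n) hm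
    · simpa [pow_add, pow_mul'] using congrArg (fun x : Q₂ => (x : Y₂) ^ p ^ m) hn
  exact hprod.comap_of_injective _ hinj

theorem memHt_of_injective_prod {X Y₁ Y₂ : Type*} [Group X] [Group Y₁] [Group Y₂] [Finite X]
    [Group.IsSolvable X] {t : ℕ} {f₁ : X →* Y₁} {f₂ : X →* Y₂} (hf₁ : Function.Surjective f₁)
    (hf₂ : Function.Surjective f₂) (hinj : Function.Injective (f₁.prod f₂))
    (h₁ : MemHt t Y₁) (h₂ : MemHt t Y₂) : MemHt t X := by
  intro p P
  obtain ⟨Q₁, hPQ₁⟩ := (P.isPGroup'.map f₁).exists_le_sylow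
  obtain ⟨Q₂, hPQ₂⟩ := (P.isPGroup'.map f₂).exists_le_sylow
  have hP : (Q₁ : Subgroup Y₁).comap f₁ ⊓ (Q₂ : Subgroup Y₂).comap f₂ = P :=
    P.3 (IsPGroup.comap_inf_comap_of_injective_prod hinj Q₁.isPGroup' Q₂.isPGroup')
      (le_inf (map_le_iff_le_comap.mp hPQ₁) (map_le_iff_le_comap.mp hPQ₂))
  have h := (KPtStep.reflTransGen_inf ((h₁ p Q₁).comap hf₁) le_top).trans ((h₂ p Q₂).comap hf₂)
  rwa [hP] at h

theorem QuotientGroup.injective_map_prod_map_inf {G : Type*} [Group G] (N₁ N₂ : Subgroup G)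
    [N₁.Normal] [N₂.Normal] :
    Function.Injective ((map (N₁ ⊓ N₂) N₁ (MonoidHom.id G) inf_le_left).prod
      (map (N₁ ⊓ N₂) N₂ (MonoidHom.id G) inf_le_right)) := by
  rw [injective_iff_map_eq_one]
  intro x hx
  obtain ⟨g, rfl⟩ := mk_surjective x
  have hg₁ : (g : G ⧸ N₁) = 1 := congrArg Prod.fst hx
  have hg₂ : (g : G ⧸ N₂) = 1 := congrArg Prod.snd hx
  rw [eq_one_iff] at hg₁ hg₂ ⊢
  exact ⟨hg₁, hg₂⟩

theorem stmt_14_general {G : Type u} [Group G] [Finite G] (t : ℕ)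
    (N₁ N₂ : Subgroup G) [N₁.Normal] [N₂.Normal]
    (h1 : MemHt t (G ⧸ N₁)) (h2 : MemHt t (G ⧸ N₂))
    (hsol : ∀ (X : Type u) [Group X] [Finite X], MemHt t X → IsSolvable X) :
    MemHt t (G ⧸ (N₁ ⊓ N₂)) := by
  have hinj := QuotientGroup.injective_map_prod_map_inf N₁ N₂
  have : Group.IsSolvable (G ⧸ N₁) := hsol _ h1
  have : Group.IsSolvable (G ⧸ N₂) := hsol _ h2
  have : Group.IsSolvable (G ⧸ (N₁ ⊓ N₂)) := Group.isSolvable_of_isSolvable_injective hinj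
  exact memHt_of_injective_prod
    (QuotientGroup.map_surjective_of_surjective _ _ _ QuotientGroup.mk_surjective _)
    (QuotientGroup.map_surjective_of_surjective _ _ _ QuotientGroup.mk_surjective _) hinj h1 h2

theorem stmt_14 {G : Type u} [Group G] [Finite G] (t : ℕ) (ht : 1 ≤ t)
    (N₁ N₂ : Subgroup G) [N₁.Normal] [N₂.Normal]
    (h1 : MemHt t (G ⧸ N₁)) (h2 : MemHt t (G ⧸ N₂))
    (hsol : ∀ (X : Type u) [Group X] [Finite X], MemHt t X → IsSolvable X) :
    MemHt t (G ⧸ (N₁ ⊓ N₂)) :=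
  stmt_14_general t N₁ N₂ h1 h2 hsol
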